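/- With t, t_r, C_0, C_r as above, every closed disc centered at a point of C_0 that is contained in the tile t contains the point (2a,0), and every closed disc centered at a point of C_r that is contained in t ∪ t_r contains the point (2a,0). -/

import Mathlib

open Metric

noncomputable abbrev pt (x y : ℝ) : EuclideanSpace ℝ (Fin 2) := WithLp.toLp 2 ![x, y]

/-- The tile `t = [−5a,5a]²`. -/
def tileT (a : ℝ) : Set (EuclideanSpace ℝ (Fin 2)) :=
  {p | p 0 ∈ Set.Icc (-(5*a)) (5*a) ∧ p 1 ∈ Set.Icc (-(5*a)) (5*a)}

/-- The right neighbouring tile `t_r = [5a,15a] × [−5a,5a]`. -/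
def tileTr (a : ℝ) : Set (EuclideanSpace ℝ (Fin 2)) :=
  {p | p 0 ∈ Set.Icc (5*a) (15*a) ∧ p 1 ∈ Set.Icc (-(5*a)) (5*a)}

/-! Both regions are axis-parallel boxes, `t ∪ t_r = [−5a,15a] × [−5a,5a]`. A point `p` of `C_0`
or `C_r` lies at distance at least `4a` from the boundary of its box, so its maximal disc has
radius at least `4a`, while `(2a,0)` lies within `2a + a = 3a` of `p`. -/

lemma le_infDist_compl_of_ball_subset {X : Type*} [PseudoMetricSpace X] {x : X} {r : ℝ}
    {s : Set X} (hs : sᶜ.Nonempty) (h : ball x r ⊆ s) : r ≤ infDist x sᶜ :=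
  (le_infDist hs).2 fun _ hy => not_lt.1 fun hlt => hy (h (mem_ball'.2 hlt))

section Box

variable {ι : Type*} {l u : ι → ℝ}

def box (l u : ι → ℝ) : Set (EuclideanSpace ℝ ι) := {q | ∀ i, q i ∈ Set.Icc (l i) (u i)}

lemma box_compl_nonempty [Nonempty ι] : (box l u)ᶜ.Nonempty := by
  obtain ⟨i⟩ := ‹Nonempty ι›
  exact ⟨WithLp.toLp 2 fun _ => u i + 1, fun hq => by linarith [(hq i).2]⟩

lemma apply_mem_Icc_of_mem_closedBall [Fintype ι] {c p : EuclideanSpace ℝ ι} {r : ℝ}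
    (hp : p ∈ closedBall c r) (i : ι) : p i ∈ Set.Icc (c i - r) (c i + r) := by
  have := (Real.dist_eq _ _ ▸ PiLp.dist_apply_le p c i).trans (mem_closedBall.1 hp)
  constructor <;> linarith [abs_le.1 this]

lemma ball_subset_box [Fintype ι] {p : EuclideanSpace ℝ ι} {r : ℝ}
    (hp : ∀ i, l i + r ≤ p i ∧ p i ≤ u i - r) : ball p r ⊆ box l u := by
  intro q hq i
  have := (Real.dist_eq _ _ ▸ PiLp.dist_apply_le q p i).trans_lt (mem_ball.1 hq)
  constructor <;> linarith [abs_lt.1 this, hp i]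

lemma mem_closedBall_infDist_compl_box [Fintype ι] [Nonempty ι] {x c p : EuclideanSpace ℝ ι}
    {r s : ℝ} (hp : p ∈ closedBall c r) (hx : dist x c + r ≤ s)
    (hc : ∀ i, l i + r + s ≤ c i ∧ c i ≤ u i - r - s) :
    x ∈ closedBall p (infDist p (box l u)ᶜ) := by
  have hball : ball p s ⊆ box l u := ball_subset_box fun i => by
    have := apply_mem_Icc_of_mem_closedBall hp i
    constructor <;> linarith [this.1, this.2, hc i]
  calc dist x p ≤ dist x c + dist p c := dist_triangle_right x p c
    _ ≤ s := by linarith [mem_closedBall.1 hp]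
    _ ≤ infDist p (box l u)ᶜ := le_infDist_compl_of_ball_subset box_compl_nonempty hball

end Box

lemma tileT_eq_box (a : ℝ) : tileT a = box ![-(5*a), -(5*a)] ![5*a, 5*a] := by
  ext q
  simp [tileT, box, Fin.forall_fin_two]

lemma tileT_union_tileTr_eq_box {a : ℝ} (ha : 0 ≤ a) :
    tileT a ∪ tileTr a = box ![-(5*a), -(5*a)] ![15*a, 5*a] := by
  ext q
  simp only [tileT, tileTr, box, Fin.forall_fin_two, Set.mem_union, Set.mem_ofPred_eq]
  rw [← or_and_right, ← Set.mem_union, Set.Icc_union_Icc_eq_Icc (by linarith) (by linarith)]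
  simp

lemma dist_pt_of_snd_eq (x x' y : ℝ) : dist (pt x y) (pt x' y) = |x - x'| := by
  simp [EuclideanSpace.dist_eq, Fin.sum_univ_two, Real.dist_eq, Real.sqrt_sq_eq_abs]

/-- Every maximal closed disc centred at a point of `C_0` (the disc of radius
`a` about the origin) that stays inside the tile `t` contains the point `(2a,0)`, and every
maximal closed disc centred at a point of `C_r` (the disc of radius `a` about `(4a,0)`) that
stays inside `t ∪ t_r` contains `(2a,0)`.  The maximal disc centred at `p` inside a region
`R` is the closed disc of radius `infDist p Rᶜ`. -/
theorem maximal_discs_contain_2a0 (a : ℝ) (ha : 0 < a) :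
    (∀ p ∈ closedBall (pt 0 0) a,
        pt (2*a) 0 ∈ closedBall p (Metric.infDist p (tileT a)ᶜ)) ∧
    (∀ p ∈ closedBall (pt (4*a) 0) a,
        pt (2*a) 0 ∈ closedBall p (Metric.infDist p (tileT a ∪ tileTr a)ᶜ)) := by
  refine ⟨fun p hp => ?_, fun p hp => ?_⟩
  · rw [tileT_eq_box]
    refine mem_closedBall_infDist_compl_box (s := 4*a) hp ?_ fun i => ?_
    · rw [dist_pt_of_snd_eq, sub_zero, abs_of_pos (by positivity)]
      linarith
    · fin_cases i <;>
        simp only [Fin.zero_eta, Fin.mk_one, Fin.isValue, Matrix.cons_val_zero,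
          Matrix.cons_val_one, Matrix.cons_val_fin_one] <;>
        constructor <;> linarith
  · rw [tileT_union_tileTr_eq_box ha.le]
    refine mem_closedBall_infDist_compl_box (s := 4*a) hp ?_ fun i => ?_
    · rw [dist_pt_of_snd_eq, show 2*a - 4*a = -(2*a) by ring, abs_neg, abs_of_pos (by positivity)]
      linarith
    · fin_cases i <;>
        simp only [Fin.zero_eta, Fin.mk_one, Fin.isValue, Matrix.cons_val_zero,
          Matrix.cons_val_one, Matrix.cons_val_fin_one] <;>
        constructor <;> linarith
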